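/- arXiv:2509.16902 — 2 statements merged into one kernel-verified Lean document; each statement's English description precedes it below -/
import Mathlib

section
/- For any vectors x, y, z in ℝ^d, if there exists Q > 0 such that |min_k (x ⊙ z)_k| ≤ Q (where ⊙ is the element-wise product), then ⟨x, y ⊙ z⟩ ≤ (max_k y_k)·⟨x, z⟩ + Q·(d·max_k y_k − Σ_{k=1}^d y_k). -/
open Finset

-- Sum the termwise inequality `(M - b k) * (a k - m) ≥ 0`.
theorem Finset.sum_mul_le_of_forall_le {ι R : Type*} [CommRing R] [PartialOrder R]
    [IsOrderedRing R] (s : Finset ι) {a b : ι → R} {m M : R}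
    (hb : ∀ k ∈ s, b k ≤ M) (ha : ∀ k ∈ s, m ≤ a k) :
    ∑ k ∈ s, b k * a k ≤ M * ∑ k ∈ s, a k - m * ∑ k ∈ s, (M - b k) := by
  have hgap : ∑ k ∈ s, (M - b k) * m ≤ ∑ k ∈ s, (M - b k) * a k :=
    sum_le_sum fun k hk => mul_le_mul_of_nonneg_left (ha k hk) (sub_nonneg.2 (hb k hk))
  simp only [sub_mul, sum_sub_distrib, ← sum_mul, ← mul_sum, sum_const, nsmul_eq_mul] at hgap
  rw [sum_sub_distrib, sum_const, mul_sub, nsmul_eq_mul]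
  linear_combination hgap

theorem stmt_0_general (d : ℕ) [NeZero d] (x y z : Fin d → ℝ) (Q : ℝ)
    (hmin : |Finset.univ.inf' Finset.univ_nonempty (fun k => x k * z k)| ≤ Q) :
    ∑ k, x k * (y k * z k) ≤
      (Finset.univ.sup' Finset.univ_nonempty y) * ∑ k, x k * z k +
        Q * (d * Finset.univ.sup' Finset.univ_nonempty y - ∑ k, y k) := by
  set M := univ.sup' univ_nonempty y
  set m := univ.inf' univ_nonempty fun k => x k * z k
  have hyM : ∀ k ∈ univ, y k ≤ M := fun k hk => le_sup' y hk
  have hgap_nonneg : 0 ≤ ∑ k, (M - y k) := sum_nonneg fun k hk => sub_nonneg.2 (hyM k hk)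
  have hgap : ∑ k, (M - y k) = d * M - ∑ k, y k := by simp [sum_sub_distrib]
  have hmQ : -Q ≤ m := neg_le_of_abs_le hmin
  calc ∑ k, x k * (y k * z k) = ∑ k, y k * (x k * z k) := sum_congr rfl fun k _ => by ring
    _ ≤ M * ∑ k, x k * z k - m * ∑ k, (M - y k) :=
      sum_mul_le_of_forall_le univ hyM fun k hk => inf'_le (fun k => x k * z k) hk
    _ ≤ M * ∑ k, x k * z k + Q * (d * M - ∑ k, y k) := by
      rw [← hgap]; nlinarith

/-- Lemma 1: For vectors `x, y, z ∈ ℝ^d`, if `|min_k (x ⊙ z)_k| ≤ Q` with `Q > 0`, then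
`⟨x, y ⊙ z⟩ ≤ (max_k y_k) ⟨x, z⟩ + Q (d max_k y_k − Σ_k y_k)`. -/
theorem stmt_0 (d : ℕ) [NeZero d] (x y z : Fin d → ℝ) (Q : ℝ) (hQ : 0 < Q)
    (hmin : |Finset.univ.inf' Finset.univ_nonempty (fun k => x k * z k)| ≤ Q) :
    ∑ k, x k * (y k * z k) ≤
      (Finset.univ.sup' Finset.univ_nonempty y) * ∑ k, x k * z k +
        Q * (d * Finset.univ.sup' Finset.univ_nonempty y - ∑ k, y k) :=
  stmt_0_general d x y z Q hmin
end

section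
/- For diagonal matrices X, Y, Z in ℝ^{d×d} formed from vectors x, y, z, the trace of their product satisfies Tr(XYZ) ≤ λ₁(Y)·Tr(XZ) − λ_d(XZ)·(d·λ₁(Y) − Tr(Y)), where λ₁(Y) = max_k y_k is the largest eigenvalue of Y and λ_d(XZ) = min_k (x_k z_k) is the smallest eigenvalue of XZ. -/
open Finset

theorem mul_le_mul_sub_mul_sub_of_le {R : Type*} [CommRing R] [PartialOrder R]
    [IsOrderedRing R] {a b M m : R} (ha : a ≤ M) (hb : m ≤ b) :
    a * b ≤ M * b - m * (M - a) := by
  linear_combination mul_nonneg (sub_nonneg.2 ha) (sub_nonneg.2 hb)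

theorem sum_mul_le_sup'_mul_sum_sub_inf'_mul {ι R : Type*} [CommRing R] [LinearOrder R]
    [IsOrderedRing R] (s : Finset ι) (hs : s.Nonempty) (a b : ι → R) :
    ∑ i ∈ s, a i * b i ≤
      s.sup' hs a * ∑ i ∈ s, b i - s.inf' hs b * (#s * s.sup' hs a - ∑ i ∈ s, a i) := by
  have hcard : (#s : R) * s.sup' hs a = ∑ _i ∈ s, s.sup' hs a := by simp
  rw [hcard, ← sum_sub_distrib, mul_sum, mul_sum, ← sum_sub_distrib]
  exact sum_le_sum fun i hi =>
    mul_le_mul_sub_mul_sub_of_le (le_sup' a hi) (inf'_le b hi)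

/-- For diagonal matrices `X = diag x`, `Y = diag y`, `Z = diag z`,
`Tr(XYZ) ≤ λ₁(Y)·Tr(XZ) − λ_d(XZ)·(d·λ₁(Y) − Tr(Y))`, where `λ₁(Y) = max_k y_k` and
`λ_d(XZ) = min_k x_k z_k`. -/
theorem stmt_1 (d : ℕ) [NeZero d] (x y z : Fin d → ℝ) :
    Matrix.trace (Matrix.diagonal x * Matrix.diagonal y * Matrix.diagonal z) ≤
      (Finset.univ.sup' Finset.univ_nonempty y) *
          Matrix.trace (Matrix.diagonal x * Matrix.diagonal z) -
        (Finset.univ.inf' Finset.univ_nonempty (fun k => x k * z k)) *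
          (d * Finset.univ.sup' Finset.univ_nonempty y -
            Matrix.trace (Matrix.diagonal y)) := by
  simp only [Matrix.diagonal_mul_diagonal, Matrix.trace_diagonal]
  calc ∑ k, x k * y k * z k = ∑ k, y k * (x k * z k) := sum_congr rfl fun k _ => by ring
    _ ≤ _ := by
      simpa using sum_mul_le_sup'_mul_sum_sub_inf'_mul univ univ_nonempty y (x * z)
end
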